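/- Under the shared-Bernoulli coupling of Greedy and OPT with geometric usage durations F_i = Geometric(p_i) and p = min_i p_i, for every resource i ∈ {1,...,N} and time t ∈ {1,...,T}: Pr(A*_t = A_t = i) ≥ (p/(1-p)) · Pr(A*_t = i and O_{it}). -/

import Mathlib

open Finset

/-- An online policy for the online matching problem with reusable resources,
with `N` resources, `T` requests, and neighborhoods `Nbr`.  Upon arrival of
request `t`, the policy observes the time `t`, the set of currently available
resources, and the history of previously observed availability sets, and
matches the request to at most one available resource adjacent to `t`
(`none` means no match). -/
structure Policy (N T : ℕ) (Nbr : Fin T → Finset (Fin N)) where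
  act : Fin T → Finset (Fin N) → List (Finset (Fin N)) → Option (Fin N)
  feasible : ∀ t I hist i, act t I hist = some i → i ∈ I ∩ Nbr t

/-- Sample space of the shared-Bernoulli coupling for geometric usage
durations: `ω i t` is the return flag `P_{it} ~ Bernoulli (p i)`.  A resource
`i` that is unavailable returns at the start of time `t` iff `ω i t = true`;
this makes the usage duration of every match of `i` distributed as
`Geometric (p i)` on `{1, 2, ...}`. -/
abbrev Flags (N T : ℕ) := Fin N → Fin T → Bool

/-- One step of the dynamics at time `t`.  The state is the pair consisting of
the set of resources unavailable at the end of the previous step and the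
history of observed availability sets. -/
def step {N T : ℕ} {Nbr : Fin T → Finset (Fin N)} (π : Policy N T Nbr)
    (ω : Flags N T) (s : Finset (Fin N) × List (Finset (Fin N))) (t : Fin T) :
    Finset (Fin N) × List (Finset (Fin N)) :=
  let busy := s.1.filter fun i => ω i t = false
  let I : Finset (Fin N) := Finset.univ \ busy
  match π.act t I s.2 with
  | none => (busy, I :: s.2)
  | some i => (insert i busy, I :: s.2)

/-- The state just before step `n` (resources unavailable at the end of step
`n-1`, together with the observed history). -/
def stateUpTo {N T : ℕ} {Nbr : Fin T → Finset (Fin N)} (π : Policy N T Nbr)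
    (ω : Flags N T) (n : ℕ) : Finset (Fin N) × List (Finset (Fin N)) :=
  ((List.finRange T).take n).foldl (step π ω) (∅, [])

/-- `I_t`: the set of resources available at time `t` under policy `π`. -/
def avail {N T : ℕ} {Nbr : Fin T → Finset (Fin N)} (π : Policy N T Nbr)
    (ω : Flags N T) (t : Fin T) : Finset (Fin N) :=
  Finset.univ \ ((stateUpTo π ω t.val).1.filter fun i => ω i t = false)

/-- `A_t`: the resource matched at time `t` under policy `π` (`none` = no match). -/
def act {N T : ℕ} {Nbr : Fin T → Finset (Fin N)} (π : Policy N T Nbr)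
    (ω : Flags N T) (t : Fin T) : Option (Fin N) :=
  π.act t (avail π ω t) (stateUpTo π ω t.val).2

/-- The total reward collected by policy `π` on the sample path `ω`. -/
def reward {N T : ℕ} {Nbr : Fin T → Finset (Fin N)} (r : Fin N → ℝ)
    (π : Policy N T Nbr) (ω : Flags N T) : ℝ :=
  ∑ t : Fin T, (act π ω t).elim 0 r

/-- Probability of the flag configuration `ω` when `P_{it} ~ Bernoulli (p i)`
independently. -/
noncomputable def weight {N T : ℕ} (p : Fin N → ℝ) (ω : Flags N T) : ℝ :=
  ∏ i : Fin N, ∏ t : Fin T, if ω i t then p i else 1 - p i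

/-- Expectation over the i.i.d. Bernoulli return flags. -/
noncomputable def expect {N T : ℕ} (p : Fin N → ℝ) (f : Flags N T → ℝ) : ℝ :=
  ∑ ω : Flags N T, weight p ω * f ω

/-- The greedy policy: match the available neighboring resource of largest
index (equivalently, of highest reward, since rewards are sorted). -/
def greedy (N T : ℕ) (Nbr : Fin T → Finset (Fin N)) : Policy N T Nbr where
  act := fun t I _ => if h : (I ∩ Nbr t).Nonempty then some ((I ∩ Nbr t).max' h) else none
  feasible := by
    intro t I hist i hi
    by_cases h : (I ∩ Nbr t).Nonempty
    · rw [dif_pos h, Option.some.injEq] at hi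
      exact hi ▸ Finset.max'_mem _ h
    · rw [dif_neg h] at hi
      exact absurd hi (by simp)

/-- `Greedy(I)`: the expected total reward of the greedy policy. -/
noncomputable def greedyVal (N T : ℕ) (Nbr : Fin T → Finset (Fin N))
    (r : Fin N → ℝ) (p : Fin N → ℝ) : ℝ :=
  expect p (reward r (greedy N T Nbr))

/-- `OPT(I)`: the optimal expected total reward over all (clairvoyant)
policies; such a policy knows the whole instance, including the request
sequence, but observes returns only as they occur. -/
noncomputable def optVal (N T : ℕ) (Nbr : Fin T → Finset (Fin N))
    (r : Fin N → ℝ) (p : Fin N → ℝ) : ℝ :=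
  ⨆ π : Policy N T Nbr, expect p (reward r π)

/-! Raising the return flag `P_{it}` of `i` from `0` to `1` maps the event
`{A*_t = i} ∩ O_{it}` injectively into `{A*_t = A_t = i}`: nothing before time `t` changes,
`i` stays available to OPT (which is matching it) and becomes available to Greedy, for which
it is now the largest available neighbour. The flip multiplies the probability of a sample path
by `p_i / (1 - p_i) ≥ p / (1 - p)`. -/

lemma Finset.mul_sum_le_sum_of_injOn {ι R : Type*} [DecidableEq ι]
    [NonUnitalNonAssocSemiring R] [PartialOrder R] [IsOrderedAddMonoid R]
    {s t : Finset ι} {φ : ι → ι} {w : ι → R} (c : R) (hφ : Set.InjOn φ s)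
    (hst : Set.MapsTo φ s t) (hw : ∀ x ∈ t, 0 ≤ w x) (hle : ∀ x ∈ s, c * w x ≤ w (φ x)) :
    c * ∑ x ∈ s, w x ≤ ∑ x ∈ t, w x :=
  calc c * ∑ x ∈ s, w x ≤ ∑ x ∈ s, w (φ x) := by rw [mul_sum]; exact sum_le_sum hle
    _ = ∑ x ∈ s.image φ, w x := (sum_image hφ).symm
    _ ≤ ∑ x ∈ t, w x :=
      sum_le_sum_of_subset_of_nonneg (image_subset_iff.2 hst) fun x hx _ => hw x hx

lemma Fintype.mul_prod_update {ι α M : Type*} [Fintype ι] [DecidableEq ι] [CommMonoid M]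
    (g : ι → α → M) (f : ι → α) (i : ι) (a : α) :
    g i (f i) * ∏ j, g j (Function.update f i a j) = g i a * ∏ j, g j (f j) := by
  rw [Finset.prod_congr rfl fun j _ => Function.apply_update g f i a j,
    prod_update_of_mem (mem_univ i),
    prod_eq_mul_prod_sdiff_singleton_of_mem (mem_univ i) fun j => g j (f j)]
  exact mul_left_comm _ _ _

section Coupling

variable {N T : ℕ} {Nbr : Fin T → Finset (Fin N)}

lemma stateUpTo_congr (π : Policy N T Nbr) {ω ω' : Flags N T} {n : ℕ}
    (h : ∀ j (s : Fin T), (s : ℕ) < n → ω j s = ω' j s) :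
    stateUpTo π ω n = stateUpTo π ω' n := by
  refine List.foldl_ext _ _ _ fun x s hs => ?_
  obtain ⟨k, hk, rfl⟩ := List.mem_take_iff_getElem.1 hs
  have hflags : ∀ j, ω j (List.finRange T)[k] = ω' j (List.finRange T)[k] := fun j =>
    h j _ (by simp only [List.getElem_finRange, Fin.val_cast]; omega)
  simp only [step, hflags]

lemma mem_avail_iff (π : Policy N T Nbr) (ω : Flags N T) (t : Fin T) (j : Fin N) :
    j ∈ avail π ω t ↔ j ∈ (stateUpTo π ω t).1 → ω j t = true := by
  simp [avail]

lemma flag_eq_false_of_not_mem_avail {π : Policy N T Nbr} {ω : Flags N T} {t : Fin T}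
    {j : Fin N} (h : j ∉ avail π ω t) : ω j t = false := by
  rw [mem_avail_iff, Classical.not_imp, Bool.not_eq_true] at h
  exact h.2

lemma act_eq_of_avail_eq (π : Policy N T Nbr) {ω ω' : Flags N T} {t : Fin T}
    (hs : stateUpTo π ω' t = stateUpTo π ω t) (ha : avail π ω' t = avail π ω t) :
    act π ω' t = act π ω t := by
  rw [act, act, hs, ha]

lemma greedy_act_of_isGreatest {t : Fin T} {I : Finset (Fin N)} {i : Fin N}
    (hist : List (Finset (Fin N))) (h : IsGreatest (↑(I ∩ Nbr t)) i) :
    (greedy N T Nbr).act t I hist = some i := by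
  simp only [greedy]
  rw [dif_pos ⟨i, h.1⟩]
  exact congrArg some ((max'_eq_iff _ _ _).2 ⟨h.1, h.2⟩)

def raiseFlag (ω : Flags N T) (i : Fin N) (t : Fin T) : Flags N T :=
  Function.curry (Function.update (Function.uncurry ω) (i, t) true)

lemma raiseFlag_apply_of_ne (ω : Flags N T) {i j : Fin N} {t s : Fin T} (h : (j, s) ≠ (i, t)) :
    raiseFlag ω i t j s = ω j s :=
  Function.update_of_ne h _ _

lemma raiseFlag_injOn (i : Fin N) (t : Fin T) :
    Set.InjOn (raiseFlag · i t) {ω | ω i t = false} := by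
  intro ω hω ω' hω' h
  funext j s
  by_cases hjs : (j, s) = (i, t)
  · obtain ⟨rfl, rfl⟩ := Prod.ext_iff.1 hjs
    exact hω.trans hω'.symm
  · rw [← raiseFlag_apply_of_ne ω hjs, ← raiseFlag_apply_of_ne ω' hjs]
    exact congrFun (congrFun h j) s

lemma stateUpTo_raiseFlag (π : Policy N T Nbr) (ω : Flags N T) (i : Fin N) (t : Fin T) :
    stateUpTo π (raiseFlag ω i t) t = stateUpTo π ω t :=
  stateUpTo_congr π fun _ _ hs => raiseFlag_apply_of_ne ω fun h => by simp_all

lemma avail_raiseFlag (π : Policy N T Nbr) (ω : Flags N T) (i : Fin N) (t : Fin T) :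
    avail π (raiseFlag ω i t) t = insert i (avail π ω t) := by
  ext j
  by_cases hj : j = i
  · subst hj
    simp [mem_avail_iff, raiseFlag]
  · simp [mem_avail_iff, stateUpTo_raiseFlag, hj,
      raiseFlag_apply_of_ne ω (fun h : (j, t) = (i, t) => hj (Prod.ext_iff.1 h).1)]

lemma mem_avail_inter_of_act_eq_some {π : Policy N T Nbr} {ω : Flags N T} {t : Fin T}
    {i : Fin N} (h : act π ω t = some i) : i ∈ avail π ω t ∩ Nbr t :=
  π.feasible _ _ _ _ h

lemma act_raiseFlag_of_act_eq_some (π : Policy N T Nbr) {ω : Flags N T} {i : Fin N} {t : Fin T}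
    (h : act π ω t = some i) : act π (raiseFlag ω i t) t = some i := by
  have hi : i ∈ avail π ω t := (mem_inter.1 (mem_avail_inter_of_act_eq_some h)).1
  rw [act_eq_of_avail_eq π (stateUpTo_raiseFlag π ω i t)
    ((avail_raiseFlag π ω i t).trans (insert_eq_of_mem hi)), h]

lemma greedy_act_raiseFlag {ω : Flags N T} {i : Fin N} {t : Fin T} (hi : i ∈ Nbr t)
    (hgt : ∀ j, i < j → j ∉ avail (greedy N T Nbr) ω t) :
    act (greedy N T Nbr) (raiseFlag ω i t) t = some i := by
  refine greedy_act_of_isGreatest _ ⟨?_, fun j hj => ?_⟩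
  · simp [avail_raiseFlag, hi]
  · rw [coe_inter, avail_raiseFlag, coe_insert] at hj
    rcases hj.1 with rfl | hj
    · exact le_rfl
    · exact not_lt.1 fun hij => hgt j hij hj

lemma weight_eq_prod (pv : Fin N → ℝ) (ω : Flags N T) :
    weight pv ω = ∏ x : Fin N × Fin T, if Function.uncurry ω x then pv x.1 else 1 - pv x.1 :=
  (Fintype.prod_prod_type (fun x : Fin N × Fin T =>
    if Function.uncurry ω x then pv x.1 else 1 - pv x.1)).symm

lemma one_sub_mul_weight_raiseFlag (pv : Fin N → ℝ) {ω : Flags N T} {i : Fin N} {t : Fin T}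
    (h : ω i t = false) :
    (1 - pv i) * weight pv (raiseFlag ω i t) = pv i * weight pv ω := by
  have := Fintype.mul_prod_update (fun (x : Fin N × Fin T) (b : Bool) =>
    if b then pv x.1 else 1 - pv x.1) (Function.uncurry ω) (i, t) true
  simpa [weight_eq_prod, raiseFlag, h] using this

lemma weight_nonneg {pv : Fin N → ℝ} (h0 : ∀ i, 0 ≤ pv i) (h1 : ∀ i, pv i ≤ 1)
    (ω : Flags N T) : 0 ≤ weight pv ω :=
  prod_nonneg fun j _ => prod_nonneg fun s _ => by
    split_ifs
    exacts [h0 j, sub_nonneg.2 (h1 j)]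

lemma div_one_sub_mul_weight_le_weight_raiseFlag {pv : Fin N → ℝ} (h0 : ∀ i, 0 ≤ pv i)
    (h1 : ∀ i, pv i ≤ 1) {p : ℝ} {i : Fin N} (hpi : p ≤ pv i) (hp1 : p < 1) {ω : Flags N T}
    {t : Fin T} (h : ω i t = false) :
    p / (1 - p) * weight pv ω ≤ weight pv (raiseFlag ω i t) := by
  rw [div_mul_eq_mul_div, div_le_iff₀ (sub_pos.2 hp1)]
  calc p * weight pv ω ≤ pv i * weight pv ω := by gcongr; exact weight_nonneg h0 h1 ω
    _ = (1 - pv i) * weight pv (raiseFlag ω i t) := (one_sub_mul_weight_raiseFlag pv h).symm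
    _ ≤ weight pv (raiseFlag ω i t) * (1 - p) := by
      rw [mul_comm]; gcongr; exact weight_nonneg h0 h1 _

lemma expect_ite_one_zero (pv : Fin N → ℝ) (P : Flags N T → Prop) [DecidablePred P] :
    expect pv (fun ω => if P ω then 1 else 0) = ∑ ω ∈ univ.filter P, weight pv ω := by
  simp only [_root_.expect, mul_ite, mul_one, mul_zero, sum_filter]

end Coupling

theorem same_match_prob_ge_general
    (N T : ℕ)
    (Nbr : Fin T → Finset (Fin N))
    (pv : Fin N → ℝ) (hpv0 : ∀ i, 0 ≤ pv i) (hpv1 : ∀ i, pv i ≤ 1)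
    (p : ℝ) (hp : p = ⨅ i, pv i) (hp1 : p < 1)
    (π : Policy N T Nbr) (i : Fin N) (t : Fin T) :
    expect pv (fun ω =>
        if act π ω t = some i ∧ act (greedy N T Nbr) ω t = some i then 1 else 0)
      ≥ (p / (1 - p)) *
        expect pv (fun ω =>
          if act π ω t = some i ∧ (∀ j, i ≤ j → j ∉ avail (greedy N T Nbr) ω t)
          then 1 else 0) := by
  have hpi : p ≤ pv i := hp ▸ ciInf_le (Set.finite_range pv).bddBelow i
  have hflag : ∀ ω : Flags N T, (∀ j, i ≤ j → j ∉ avail (greedy N T Nbr) ω t) → ω i t = false :=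
    fun ω hbusy => flag_eq_false_of_not_mem_avail (hbusy i le_rfl)
  rw [ge_iff_le, expect_ite_one_zero, expect_ite_one_zero]
  refine mul_sum_le_sum_of_injOn _
    ((raiseFlag_injOn i t).mono fun ω hω => hflag ω (mem_filter.1 hω).2.2)
    (fun ω hω => ?_) (fun ω _ => weight_nonneg hpv0 hpv1 ω)
    fun ω hω => div_one_sub_mul_weight_le_weight_raiseFlag hpv0 hpv1 hpi hp1
      (hflag ω (mem_filter.1 hω).2.2)
  obtain ⟨hπ, hbusy⟩ := (mem_filter.1 hω).2
  exact mem_filter.2 ⟨mem_univ _, act_raiseFlag_of_act_eq_some π hπ,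
    greedy_act_raiseFlag (mem_inter.1 (mem_avail_inter_of_act_eq_some hπ)).2
      fun j hij => hbusy j hij.le⟩

/-- **Key lemma.**  Under the shared-Bernoulli coupling of Greedy and any
benchmark policy `π` (in particular the optimal clairvoyant policy `OPT`) with
geometric usage durations `F i = Geometric (pv i)` and `p = min_i pv i < 1`,
for every resource `i` and time `t`:
`Pr(A*_t = A_t = i) ≥ (p/(1-p)) · Pr(A*_t = i and O_{it})`, where `O_{it}` is
the event that every resource `j ≥ i` is unavailable under Greedy at time `t`. -/
theorem same_match_prob_ge
    (N T : ℕ) (hN : 0 < N)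
    (r : Fin N → ℝ) (hr0 : ∀ i, 0 ≤ r i) (hrmono : Monotone r)
    (Nbr : Fin T → Finset (Fin N))
    (pv : Fin N → ℝ) (hpv0 : ∀ i, 0 ≤ pv i) (hpv1 : ∀ i, pv i ≤ 1)
    (p : ℝ) (hp : p = ⨅ i, pv i) (hp1 : p < 1)
    (π : Policy N T Nbr) (i : Fin N) (t : Fin T) :
    expect pv (fun ω =>
        if act π ω t = some i ∧ act (greedy N T Nbr) ω t = some i then 1 else 0)
      ≥ (p / (1 - p)) *
        expect pv (fun ω =>
          if act π ω t = some i ∧ (∀ j, i ≤ j → j ∉ avail (greedy N T Nbr) ω t)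
          then 1 else 0) :=
  same_match_prob_ge_general N T Nbr pv hpv0 hpv1 p hp hp1 π i t
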